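/- For nonnegative integers t, N and integers u, v with t ≤ u, v ≤ N − t, the partial trace over the first t qubits satisfies Tr_t(|H^N_u⟩⟨H^N_v|) = Σ_{s=0}^{t} C(t,s) |H^{N−t}_{u−s}⟩⟨H^{N−t}_{v−s}|. -/

import Mathlib

/-!
Splitting a string of `t + n` bits into its first `t` bits `x` and last `n` bits `y`, the weight
is additive, so `|H^{t+n}_u⟩` restricted to the strings with prefix `x` is `|H^n_{u - wt x}⟩`
(no truncation occurs since `wt x ≤ t ≤ u`). The partial trace is therefore a sum over `x` of
`|H^n_{u - wt x}⟩⟨H^n_{v - wt x}|`, and grouping the `x` by weight gives the multiplicities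
`C(t, s)`.
-/

/-- Hamming weight of a bit string of length `N`. -/
def hamWeight {N : ℕ} (x : Fin N → Bool) : ℕ :=
  (Finset.univ.filter (fun i => x i = true)).card

/-- Unnormalized Dicke state `|H^N_w⟩`. -/
noncomputable def dickeH (N w : ℕ) : (Fin N → Bool) → ℂ :=
  fun x => if hamWeight x = w then 1 else 0

/-- Outer product `|f⟩⟨g|` as a matrix indexed by bit strings. -/
noncomputable def outer {N : ℕ} (f g : (Fin N → Bool) → ℂ) :
    Matrix (Fin N → Bool) (Fin N → Bool) ℂ :=
  fun x y => f x * (starRingEnd ℂ) (g y)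

/-- Partial trace over the first `t` qubits, identifying a length-`t+n`
bit string with the pair of its first `t` bits and last `n` bits. -/
noncomputable def ptrace {t n : ℕ}
    (M : Matrix (Fin (t + n) → Bool) (Fin (t + n) → Bool) ℂ) :
    Matrix (Fin n → Bool) (Fin n → Bool) ℂ :=
  fun y y' => ∑ x : Fin t → Bool, M (Fin.append x y) (Fin.append x y')

open Finset

lemma hamWeight_append {t n : ℕ} (x : Fin t → Bool) (y : Fin n → Bool) :
    hamWeight (Fin.append x y) = hamWeight x + hamWeight y := by
  simp only [hamWeight, card_filter, Fin.sum_univ_add, Fin.append_left, Fin.append_right]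

lemma hamWeight_le {t : ℕ} (x : Fin t → Bool) : hamWeight x ≤ t :=
  (card_filter_le _ _).trans_eq (card_fin t)

lemma sum_comp_hamWeight {β : Type*} [AddCommMonoid β] (t : ℕ) (f : ℕ → β) :
    ∑ x : Fin t → Bool, f (hamWeight x) = ∑ s ∈ range (t + 1), t.choose s • f s := by
  have h := sum_powerset_apply_card f (x := (univ : Finset (Fin t)))
  rw [card_univ, Fintype.card_fin] at h
  rw [← h]
  exact sum_nbij' (fun x => univ.filter (x · = true)) (fun S i => decide (i ∈ S))
    (by simp) (by simp) (fun x _ => by ext; simp) (fun S _ => by ext; simp) (fun _ _ => rfl)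

lemma dickeH_append {t n u : ℕ} (x : Fin t → Bool) (y : Fin n → Bool) (hx : hamWeight x ≤ u) :
    dickeH (t + n) u (Fin.append x y) = dickeH n (u - hamWeight x) y := by
  simp only [dickeH, hamWeight_append]
  congr 1
  exact propext (by omega)

lemma ptrace_outer_dickeH (t n u v : ℕ) (htu : t ≤ u) (htv : t ≤ v) :
    ptrace (outer (dickeH (t + n) u) (dickeH (t + n) v)) =
      ∑ x : Fin t → Bool, outer (dickeH n (u - hamWeight x)) (dickeH n (v - hamWeight x)) := by
  ext y y'
  simp only [ptrace, outer, Matrix.sum_apply,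
    dickeH_append _ _ ((hamWeight_le _).trans htu), dickeH_append _ _ ((hamWeight_le _).trans htv)]

theorem ptrace_dickeH_outer_general (t n u v : ℕ)
    (htu : t ≤ u) (htv : t ≤ v) :
    ptrace (outer (dickeH (t + n) u) (dickeH (t + n) v)) =
      ∑ s ∈ Finset.range (t + 1),
        (t.choose s : ℂ) • outer (dickeH n (u - s)) (dickeH n (v - s)) := by
  simp only [ptrace_outer_dickeH t n u v htu htv, Nat.cast_smul_eq_nsmul,
    sum_comp_hamWeight t fun s => outer (dickeH n (u - s)) (dickeH n (v - s))]

/-- `Tr_t(|H^N_u⟩⟨H^N_v|) = Σ_{s=0}^{t} C(t,s) |H^{N−t}_{u−s}⟩⟨H^{N−t}_{v−s}|`,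
with `N = t + n` so that `N − t = n`. -/
theorem ptrace_dickeH_outer (t n u v : ℕ)
    (htu : t ≤ u) (hun : u ≤ n) (htv : t ≤ v) (hvn : v ≤ n) :
    ptrace (outer (dickeH (t + n) u) (dickeH (t + n) v)) =
      ∑ s ∈ Finset.range (t + 1),
        (t.choose s : ℂ) • outer (dickeH n (u - s)) (dickeH n (v - s)) :=
  ptrace_dickeH_outer_general t n u v htu htv
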